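/- arXiv:0910.5880 — 2 statements merged into one kernel-verified Lean document; each statement's English description precedes it below -/
import Mathlib

section
/- Let g(x) = |x|^{-(d-α-λ)}·1_{|x|<1} with α+β+λ < d, λ > 0. Then there exists c > 0 such that for all x with 0 < |x| < 1/e, the weighted Riesz potential v(x) = |x|^{-β} ∫ g(y)|y|^{-α}|x-y|^{-λ} dy satisfies v(x) ≥ c · |x|^{-β} · log(1/|x|). -/
/-!
Set `t = λ`, `n = d` and `s = n - t`. Whatever `α` is, `g(y) |y|^{-α} = |y|^{-s}` on the unit
ball, so `v(x) = |x|^{-β} ∫_{|y|<1} |y|^{-s} |x - y|^{-t} dy`. The integral converges because on the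
region `|y| ≥ |x|/2` the first factor is bounded and on the complementary one the second is
bounded, while both singularities are locally integrable (`s, t < n`). For `2|x| < |y|` we have
`|x - y| ≤ 3|y|/2`, so the integrand is at least `(2/3)^t |y|^{-n}`, whose integral over the
annulus `2|x| < |y| < 1` is `n |B₁| log(1/(2|x|))` in polar coordinates. Finally, if
`|x| ≤ e⁻¹` then `log(1/(2|x|)) ≥ (1 - log 2) log(1/|x|)`.
-/

open MeasureTheory Metric Real Set

lemma one_sub_log_two_mul_log_le_log {r : ℝ} (hr : 0 < r) (hre : r ≤ (exp 1)⁻¹) :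
    (1 - log 2) * log (1 / r) ≤ log (1 / (2 * r)) := by
  have hL : 1 ≤ log (1 / r) := by
    rw [le_log_iff_exp_le (by positivity), le_one_div (exp_pos 1) hr, one_div]
    exact hre
  have h_split : log (1 / (2 * r)) = log (1 / r) - log 2 := by
    rw [one_div, one_div, log_inv, log_inv, log_mul two_ne_zero hr.ne']
    ring
  rw [h_split]
  nlinarith [mul_nonneg (log_nonneg one_le_two) (sub_nonneg.2 hL)]

section SeminormedAddCommGroup

variable {E : Type*} [SeminormedAddCommGroup E]

lemma norm_rpow_neg_mul_norm_sub_rpow_neg_le {s t : ℝ} (hs : 0 ≤ s) (ht : 0 ≤ t) {x : E}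
    (hx : 0 < ‖x‖) (y : E) :
    ‖y‖ ^ (-s) * ‖x - y‖ ^ (-t) ≤
      (‖x‖ / 2) ^ (-s) * ‖x - y‖ ^ (-t) + (‖x‖ / 2) ^ (-t) * ‖y‖ ^ (-s) := by
  have hx2 : 0 < ‖x‖ / 2 := by positivity
  rcases le_or_gt (‖x‖ / 2) ‖y‖ with hy | hy
  · have : ‖y‖ ^ (-s) ≤ (‖x‖ / 2) ^ (-s) :=
      rpow_le_rpow_of_nonpos hx2 hy (neg_nonpos.2 hs)
    nlinarith [rpow_nonneg (norm_nonneg (x - y)) (-t), rpow_nonneg hx2.le (-t),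
      rpow_nonneg (norm_nonneg y) (-s)]
  · have hxy : ‖x‖ / 2 ≤ ‖x - y‖ := by linarith [norm_sub_norm_le x y]
    have : ‖x - y‖ ^ (-t) ≤ (‖x‖ / 2) ^ (-t) :=
      rpow_le_rpow_of_nonpos hx2 hxy (neg_nonpos.2 ht)
    nlinarith [rpow_nonneg (norm_nonneg (x - y)) (-t), rpow_nonneg hx2.le (-s),
      rpow_nonneg (norm_nonneg y) (-s)]

lemma le_norm_rpow_neg_mul_norm_sub_rpow_neg {s t : ℝ} (ht : 0 ≤ t) {x y : E} (hy : 0 < ‖y‖)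
    (hxy : 2 * ‖x‖ ≤ ‖y‖) :
    (2 / 3) ^ t * ‖y‖ ^ (-(s + t)) ≤ ‖y‖ ^ (-s) * ‖x - y‖ ^ (-t) := by
  have hxy_pos : 0 < ‖x - y‖ := by linarith [norm_sub_norm_le y x, norm_sub_rev x y]
  have hxy_le : ‖x - y‖ ≤ 3 / 2 * ‖y‖ := by linarith [norm_sub_le x y]
  have h32 : (3 / 2 : ℝ) ^ (-t) = (2 / 3) ^ t := by
    rw [rpow_neg (by norm_num), ← inv_rpow (by norm_num)]
    norm_num
  calc (2 / 3) ^ t * ‖y‖ ^ (-(s + t)) = ‖y‖ ^ (-s) * (3 / 2 * ‖y‖) ^ (-t) := by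
        rw [mul_rpow (by norm_num) hy.le, h32, neg_add, rpow_add hy]
        ring
    _ ≤ ‖y‖ ^ (-s) * ‖x - y‖ ^ (-t) :=
        mul_le_mul_of_nonneg_left (rpow_le_rpow_of_nonpos hxy_pos hxy_le (neg_nonpos.2 ht))
          (by positivity)

lemma ite_norm_lt_one_rpow_mul_rpow_mul {p q : ℝ} (hpq : p + q ≠ 0) (f : E → ℝ) (y : E) :
    (if ‖y‖ < 1 then ‖y‖ ^ p else 0) * ‖y‖ ^ q * f y =
      (ball 0 1).indicator (fun y ↦ ‖y‖ ^ (p + q) * f y) y := by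
  by_cases hy : ‖y‖ < 1
  · rw [if_pos hy, indicator_of_mem (mem_ball_zero_iff.2 hy), rpow_add' (norm_nonneg y) hpq]
  · rw [if_neg hy, indicator_of_notMem (by simpa using hy), zero_mul, zero_mul]

end SeminormedAddCommGroup

section AddHaar

variable {E : Type*} [NormedAddCommGroup E] [NormedSpace ℝ E] [FiniteDimensional ℝ E]
  [MeasurableSpace E] [BorelSpace E] (μ : Measure E) [μ.IsAddHaarMeasure]

lemma integrableOn_ball_norm_rpow_neg (hE : 1 ≤ Module.finrank ℝ E) {t : ℝ}
    (ht : t < Module.finrank ℝ E) (R : ℝ) :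
    IntegrableOn (fun y : E ↦ ‖y‖ ^ (-t)) (ball 0 R) μ :=
  integrableOn_ball_of_norm_le_rpow (C := 1) hE ht
    (ae_of_all _ fun y ↦ by rw [one_mul, norm_of_nonneg (by positivity)])
    (by fun_prop : Measurable fun y : E ↦ ‖y‖ ^ (-t)).aestronglyMeasurable

lemma integrableOn_ball_norm_sub_rpow_neg (hE : 1 ≤ Module.finrank ℝ E) {t : ℝ}
    (ht : t < Module.finrank ℝ E) (x : E) (R : ℝ) :
    IntegrableOn (fun y : E ↦ ‖x - y‖ ^ (-t)) (ball 0 R) μ := by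
  have hK := (integrableOn_ball_norm_rpow_neg μ hE ht (‖x‖ + R)).integrable_indicator
    measurableSet_ball
  refine (hK.comp_sub_left x).integrableOn.congr_fun (fun y hy ↦ ?_) measurableSet_ball
  refine indicator_of_mem (mem_ball_zero_iff.2 ?_) _
  calc ‖x - y‖ ≤ ‖x‖ + ‖y‖ := norm_sub_le x y
    _ < ‖x‖ + R := by simpa using mem_ball_zero_iff.1 hy

lemma integrable_indicator_ball_rpow_mul_rpow_sub
    (hE : 1 ≤ Module.finrank ℝ E) {s t : ℝ} (hs : 0 ≤ s) (hsn : s < Module.finrank ℝ E)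
    (ht : 0 ≤ t) (htn : t < Module.finrank ℝ E) {x : E} (hx : 0 < ‖x‖) (R : ℝ) :
    Integrable ((ball 0 R).indicator fun y ↦ ‖y‖ ^ (-s) * ‖x - y‖ ^ (-t)) μ := by
  refine IntegrableOn.integrable_indicator ?_ measurableSet_ball
  refine Integrable.mono'
    (((integrableOn_ball_norm_sub_rpow_neg μ hE htn x R).const_mul ((‖x‖ / 2) ^ (-s))).add
      ((integrableOn_ball_norm_rpow_neg μ hE hsn R).const_mul ((‖x‖ / 2) ^ (-t))))
    (by fun_prop : Measurable fun y : E ↦ ‖y‖ ^ (-s) * ‖x - y‖ ^ (-t)).aestronglyMeasurable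
    (ae_of_all _ fun y ↦ ?_)
  rw [norm_of_nonneg (by positivity)]
  exact norm_rpow_neg_mul_norm_sub_rpow_neg_le hs ht hx y

lemma integral_indicator_Ioo_rpow_neg_finrank (hE : 1 ≤ Module.finrank ℝ E) {a b : ℝ}
    (ha : 0 < a) (hab : a ≤ b) :
    ∫ y, (Ioo a b).indicator (fun r ↦ r ^ (-(Module.finrank ℝ E : ℝ))) ‖y‖ ∂μ =
      Module.finrank ℝ E * μ.real (ball 0 1) * log (b / a) := by
  have : Nontrivial E := Module.nontrivial_of_finrank_pos (R := ℝ) hE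
  set n := Module.finrank ℝ E
  have h_inv : ∀ r ∈ Ioo a b, r ^ (n - 1) * r ^ (-(n : ℝ)) = r⁻¹ := fun r hr ↦ by
    rw [← rpow_natCast, ← rpow_add (ha.trans hr.1), Nat.cast_sub hE, ← rpow_neg_one]
    congr 1
    ring
  have h_ind : (fun r : ℝ ↦ r ^ (n - 1) * (Ioo a b).indicator (fun r ↦ r ^ (-(n : ℝ))) r) =
      (Ioo a b).indicator (fun r ↦ r ^ (n - 1) * r ^ (-(n : ℝ))) :=
    funext fun r ↦ (indicator_mul_right _ (fun r : ℝ ↦ r ^ (n - 1)) _).symm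
  simp only [integral_fun_norm_addHaar, smul_eq_mul]
  rw [h_ind, setIntegral_indicator measurableSet_Ioo,
    inter_eq_right.2 (Ioo_subset_Ioi_self.trans (Ioi_subset_Ioi ha.le)),
    setIntegral_congr_fun measurableSet_Ioo h_inv, ← integral_Ioc_eq_integral_Ioo,
    ← intervalIntegral.integral_of_le hab, integral_inv_of_pos ha (ha.trans_le hab),
    nsmul_eq_mul]
  ring

lemma mul_log_le_integral_indicator_ball_rpow_mul_rpow_sub
    (hE : 1 ≤ Module.finrank ℝ E) {t : ℝ} (ht : 0 < t) (htn : t < Module.finrank ℝ E) {x : E}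
    (hx : 0 < ‖x‖) (hx2 : 2 * ‖x‖ < 1) :
    (2 / 3) ^ t * (Module.finrank ℝ E * μ.real (ball 0 1) * log (1 / (2 * ‖x‖))) ≤
      ∫ y, (ball 0 1).indicator
        (fun y ↦ ‖y‖ ^ (-(Module.finrank ℝ E - t)) * ‖x - y‖ ^ (-t)) y ∂μ := by
  rw [← integral_indicator_Ioo_rpow_neg_finrank μ hE (by positivity) hx2.le,
    ← integral_const_mul]
  refine integral_mono_of_nonneg (ae_of_all _ fun y ↦ mul_nonneg (by positivity)
      (indicator_nonneg (fun r hr ↦ rpow_nonneg (by linarith [hr.1]) _) _))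
    (integrable_indicator_ball_rpow_mul_rpow_sub μ hE (by linarith)
      (by linarith) ht.le htn hx 1) (ae_of_all _ fun y ↦ ?_)
  dsimp only
  by_cases hy : ‖y‖ ∈ Ioo (2 * ‖x‖) 1
  · rw [indicator_of_mem hy, indicator_of_mem (mem_ball_zero_iff.2 hy.2)]
    simpa using le_norm_rpow_neg_mul_norm_sub_rpow_neg (s := Module.finrank ℝ E - t) ht.le
      (by linarith [hy.1]) hy.1.le
  · rw [indicator_of_notMem hy, mul_zero]
    exact indicator_nonneg (fun y _ ↦ by positivity) y

lemma mul_log_le_integral_indicator_ball_rpow_mul_rpow_sub_of_lt_exp_inv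
    (hE : 1 ≤ Module.finrank ℝ E) {t : ℝ} (ht : 0 < t) (htn : t < Module.finrank ℝ E) {x : E}
    (hx : 0 < ‖x‖) (hxe : ‖x‖ < (exp 1)⁻¹) :
    (2 / 3) ^ t * (Module.finrank ℝ E * μ.real (ball 0 1) * (1 - log 2)) * log (1 / ‖x‖) ≤
      ∫ y, (ball 0 1).indicator
        (fun y ↦ ‖y‖ ^ (-(Module.finrank ℝ E - t)) * ‖x - y‖ ^ (-t)) y ∂μ := by
  have hx2 : 2 * ‖x‖ < 1 := by
    have : (exp 1)⁻¹ < 1 / 2 := by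
      rw [inv_lt_comm₀ (exp_pos 1) (by norm_num)]
      linarith [exp_one_gt_d9]
    linarith
  set V := μ.real (ball (0 : E) 1)
  calc _ = (2 / 3) ^ t * (Module.finrank ℝ E * V) * ((1 - log 2) * log (1 / ‖x‖)) := by
        ring
    _ ≤ (2 / 3) ^ t * (Module.finrank ℝ E * V) * log (1 / (2 * ‖x‖)) := by
        gcongr
        exact one_sub_log_two_mul_log_le_log hx hxe.le
    _ = (2 / 3) ^ t * (Module.finrank ℝ E * V * log (1 / (2 * ‖x‖))) := mul_assoc _ _ _
    _ ≤ _ := mul_log_le_integral_indicator_ball_rpow_mul_rpow_sub μ hE ht htn hx hx2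

end AddHaar

theorem stmt_3_general (d : ℕ) (α β lam : ℝ)
    (hα0 : 0 ≤ α) (hβ0 : 0 ≤ β) (hlam : 0 < lam) (hsum : α + β + lam < d)
    (g : EuclideanSpace ℝ (Fin d) → ℝ)
    (hg : ∀ x, g x = if ‖x‖ < 1 then ‖x‖ ^ (-((d : ℝ) - α - lam)) else 0)
    (v : EuclideanSpace ℝ (Fin d) → ℝ)
    (hv : ∀ x, v x = ‖x‖ ^ (-β) * ∫ y, g y * ‖y‖ ^ (-α) * ‖x - y‖ ^ (-lam)) :
    ∃ c : ℝ, 0 < c ∧ ∀ x : EuclideanSpace ℝ (Fin d),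
      0 < ‖x‖ → ‖x‖ < (Real.exp 1)⁻¹ →
      c * ‖x‖ ^ (-β) * Real.log (1 / ‖x‖) ≤ v x := by
  have hdim : Module.finrank ℝ (EuclideanSpace ℝ (Fin d)) = d := finrank_euclideanSpace_fin
  have hlam_d : lam < d := by linarith
  have hd : (0 : ℝ) < d := hlam.trans hlam_d
  have hE : 1 ≤ Module.finrank ℝ (EuclideanSpace ℝ (Fin d)) := by
    rw [hdim]
    exact Nat.cast_pos.1 hd
  have h_integrand (x : EuclideanSpace ℝ (Fin d)) :
      (fun y ↦ g y * ‖y‖ ^ (-α) * ‖x - y‖ ^ (-lam)) =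
        (ball 0 1).indicator (fun y ↦ ‖y‖ ^ (-(d - lam)) * ‖x - y‖ ^ (-lam)) := by
    ext y
    rw [hg, ite_norm_lt_one_rpow_mul_rpow_mul (f := fun y ↦ ‖x - y‖ ^ (-lam)) (by linarith),
      show -((d : ℝ) - α - lam) + -α = -(d - lam) by ring]
  set V := volume.real (ball (0 : EuclideanSpace ℝ (Fin d)) 1)
  have hV : 0 < V :=
    ENNReal.toReal_pos (measure_ball_pos volume 0 one_pos).ne' measure_ball_lt_top.ne
  have h_log_two : 0 < 1 - log 2 := by linarith [log_two_lt_d9]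
  refine ⟨(2 / 3) ^ lam * (d * V * (1 - log 2)), by positivity, fun x hx hxe ↦ ?_⟩
  have h := mul_log_le_integral_indicator_ball_rpow_mul_rpow_sub_of_lt_exp_inv volume hE
    hlam (by rwa [hdim]) hx hxe
  rw [hdim] at h
  rw [hv, h_integrand]
  calc _ = ‖x‖ ^ (-β) * ((2 / 3) ^ lam * (d * V * (1 - log 2)) * log (1 / ‖x‖)) := by ring
    _ ≤ _ := mul_le_mul_of_nonneg_left h (by positivity)

theorem stmt_3 (d : ℕ) (hd : 1 ≤ d) (α β lam : ℝ)
    (hα0 : 0 ≤ α) (hβ0 : 0 ≤ β) (hlam : 0 < lam) (hsum : α + β + lam < d)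
    (g : EuclideanSpace ℝ (Fin d) → ℝ)
    (hg : ∀ x, g x = if ‖x‖ < 1 then ‖x‖ ^ (-((d : ℝ) - α - lam)) else 0)
    (v : EuclideanSpace ℝ (Fin d) → ℝ)
    (hv : ∀ x, v x = ‖x‖ ^ (-β) * ∫ y, g y * ‖y‖ ^ (-α) * ‖x - y‖ ^ (-lam)) :
    ∃ c : ℝ, 0 < c ∧ ∀ x : EuclideanSpace ℝ (Fin d),
      0 < ‖x‖ → ‖x‖ < (Real.exp 1)⁻¹ →
      c * ‖x‖ ^ (-β) * Real.log (1 / ‖x‖) ≤ v x :=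
  stmt_3_general d α β lam hα0 hβ0 hlam hsum g hg v hv
end

section
/- If p ≤ d/(d-α) (with α > 0), then the weighted Riesz potential is unbounded: there exists a nonnegative f ∈ L^p(ℝ^d) with ‖f‖_p > 0 such that (I f)(x) = +∞ for every x ≠ 0, where (I f)(x) = |x|^{-β} ∫ f(y)|y|^{-α}|x-y|^{-λ} dy. -/
/-!
Take `f(y) = ‖y‖^(α-d) / log (1/‖y‖)` on the ball of radius `1/2`. In polar coordinates `‖f‖_p^p`
is the integral of `r^(d-1+(α-d)p) / log(1/r)^p` near `0`; this is finite when the exponent of `r`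
exceeds `-1`, i.e. `p < d/(d-α)`, and also at the endpoint `p = d/(d-α)`, because there `p > 1`
and `t = log(1/r)` turns it into `∫ t^(-p) dt`. Near `y = 0` the kernel `‖x-y‖^(-λ)` is bounded
below when `x ≠ 0`, while `f(y)‖y‖^(-α) = ‖y‖^(-d) / log(1/‖y‖)` has radial integral
`∫ dr / (r log(1/r)) = ∞`.
-/

open MeasureTheory Metric Real Set Filter Module
open scoped ENNReal

lemma integrableOn_inv_mul_neg_log_rpow_iff {ε p : ℝ} (hε0 : 0 < ε) (hε1 : ε < 1) :
    IntegrableOn (fun r ↦ r⁻¹ * (-log r) ^ (-p)) (Ioo 0 ε) ↔ 1 < p := by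
  have hderiv : ∀ r ∈ Ioo 0 ε, HasDerivWithinAt (fun r ↦ -log r) (-r⁻¹) (Ioo 0 ε) r :=
    fun r hr ↦ (hasDerivAt_log hr.1.ne').neg.hasDerivWithinAt
  have hanti : AntitoneOn (fun r ↦ -log r) (Ioo 0 ε) :=
    fun a ha b _ hab ↦ neg_le_neg (log_le_log ha.1 hab)
  have himage : (fun r ↦ -log r) '' Ioo 0 ε = Ioi (-log ε) := by
    rw [← image_image (fun u ↦ -u) log, image_log_Ioo_zero hε0, image_neg_Iio]
  have hlogε : 0 < -log ε := neg_pos.2 (log_neg hε0 hε1)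
  rw [← neg_lt_neg_iff, ← integrableOn_Ioi_rpow_iff hlogε, ← himage,
    integrableOn_image_iff_integrableOn_deriv_smul_of_antitoneOn measurableSet_Ioo hderiv hanti]
  simp only [neg_neg, smul_eq_mul]

lemma integrableOn_rpow_mul_neg_log_rpow {ε e p : ℝ} (hε0 : 0 < ε) (hε1 : ε < 1)
    (h : -1 < e ∧ 0 ≤ p ∨ e = -1 ∧ 1 < p) :
    IntegrableOn (fun r ↦ r ^ e * (-log r) ^ (-p)) (Ioo 0 ε) := by
  rcases h with ⟨he, hp⟩ | ⟨rfl, hp⟩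
  · have hlogε : 0 < -log ε := neg_pos.2 (log_neg hε0 hε1)
    refine (((intervalIntegral.integrableOn_Ioo_rpow_iff hε0).2 he).mul_const
      ((-log ε) ^ (-p))).mono' ?_ ?_
    · refine ContinuousOn.aestronglyMeasurable ?_ measurableSet_Ioo
      exact (continuousOn_id.rpow_const fun r hr ↦ Or.inl hr.1.ne').mul
        ((continuousOn_log.mono fun r hr ↦ hr.1.ne').neg.rpow_const
          fun r hr ↦ Or.inl (neg_pos.2 (log_neg hr.1 (hr.2.trans hε1))).ne')
    · filter_upwards [ae_restrict_mem measurableSet_Ioo] with r hr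
      have hlog : -log ε < -log r := neg_lt_neg (log_lt_log hr.1 hr.2)
      rw [norm_mul, norm_of_nonneg (rpow_nonneg hr.1.le _),
        norm_of_nonneg (rpow_nonneg (hlogε.trans hlog).le _)]
      exact mul_le_mul_of_nonneg_left (rpow_le_rpow_of_nonpos hlogε hlog.le (neg_nonpos.2 hp))
        (rpow_nonneg hr.1.le _)
  · refine ((integrableOn_inv_mul_neg_log_rpow_iff hε0 hε1).2 hp).congr_fun
      (fun r hr ↦ by simp only [rpow_neg_one]) measurableSet_Ioo

lemma rpow_natCast_pred_mul_abs_div_neg_log_rpow {r : ℝ} (hr0 : 0 < r) (hr1 : r < 1) {n : ℕ}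
    (hn : 0 < n) (s p : ℝ) :
    r ^ (n - 1) * |r ^ s / -log r| ^ p = r ^ ((n : ℝ) - 1 + s * p) * (-log r) ^ (-p) := by
  have hlog : 0 < -log r := neg_pos.2 (log_neg hr0 hr1)
  rw [abs_of_pos (div_pos (rpow_pos_of_pos hr0 s) hlog), div_rpow (rpow_nonneg hr0.le s) hlog.le,
    ← rpow_mul hr0.le, ← rpow_natCast, Nat.cast_pred hn, rpow_add hr0, rpow_neg hlog.le]
  ring

section

variable {E : Type*} [NormedAddCommGroup E]

noncomputable def powLogSingularity (s : ℝ) : E → ℝ :=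
  (ball (0 : E) 2⁻¹).indicator fun y ↦ ‖y‖ ^ s / -log ‖y‖

lemma powLogSingularity_nonneg (s : ℝ) (y : E) : 0 ≤ powLogSingularity s y := by
  refine indicator_nonneg (fun y hy ↦ div_nonneg (rpow_nonneg (norm_nonneg y) s) ?_) y
  exact neg_nonneg.2
    (log_nonpos (norm_nonneg y) ((mem_ball_zero_iff.1 hy).le.trans (by norm_num)))

lemma powLogSingularity_pos {s : ℝ} {y : E} (hy0 : y ≠ 0) (hy : ‖y‖ < 2⁻¹) :
    0 < powLogSingularity s y := by
  rw [powLogSingularity, indicator_of_mem (mem_ball_zero_iff.2 hy)]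
  exact div_pos (rpow_pos_of_pos (norm_pos_iff.2 hy0) s)
    (neg_pos.2 (log_neg (norm_pos_iff.2 hy0) (hy.trans (by norm_num))))

variable [NormedSpace ℝ E] [FiniteDimensional ℝ E] [Nontrivial E] [MeasurableSpace E]
  [BorelSpace E] (μ : Measure E) [μ.IsAddHaarMeasure]

lemma memLp_powLogSingularity {s p : ℝ} (hp : 0 < p)
    (h : -(finrank ℝ E : ℝ) < s * p ∨ s * p = -finrank ℝ E ∧ 1 < p) :
    MemLp (powLogSingularity s) (ENNReal.ofReal p) μ := by
  have hmeas : AEStronglyMeasurable (fun y : E ↦ ‖y‖ ^ s / -log ‖y‖) (μ.restrict (ball 0 2⁻¹)) :=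
    (by fun_prop : Measurable fun y : E ↦ ‖y‖ ^ s / -log ‖y‖).aestronglyMeasurable
  rw [powLogSingularity, memLp_indicator_iff_restrict measurableSet_ball,
    ← integrable_norm_rpow_iff hmeas (by simpa using hp) ENNReal.ofReal_ne_top,
    ENNReal.toReal_ofReal hp.le]
  refine (integrableOn_fun_norm_addHaar μ (f := fun r ↦ ‖r ^ s / -log r‖ ^ p)).2 ?_
  refine (integrableOn_rpow_mul_neg_log_rpow (e := finrank ℝ E - 1 + s * p) (p := p)
    (by norm_num) (by norm_num) ?_).congr_fun (fun r hr ↦ ?_) measurableSet_Ioo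
  · rcases h with h | ⟨h, hp1⟩
    · exact Or.inl ⟨by linarith, hp.le⟩
    · exact Or.inr ⟨by linarith, hp1⟩
  · rw [smul_eq_mul, norm_eq_abs, rpow_natCast_pred_mul_abs_div_neg_log_rpow hr.1
      (hr.2.trans (by norm_num)) finrank_pos]

lemma eLpNorm_powLogSingularity_ne_zero (s : ℝ) {p : ℝ≥0∞} (hp : p ≠ 0) :
    eLpNorm (powLogSingularity s) p μ ≠ 0 := by
  have hmeas : Measurable (powLogSingularity (E := E) s) :=
    (by fun_prop : Measurable fun y : E ↦ ‖y‖ ^ s / -log ‖y‖).indicator measurableSet_ball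
  rw [Ne, eLpNorm_eq_zero_iff hmeas.aestronglyMeasurable hp, EventuallyEq, ae_iff]
  have hsub : ball (0 : E) 2⁻¹ \ {0} ⊆ {y | powLogSingularity s y ≠ 0} :=
    fun y hy ↦ (powLogSingularity_pos hy.2 (mem_ball_zero_iff.1 hy.1)).ne'
  intro h
  have := measure_mono_null hsub h
  rw [measure_sdiff_null (measure_singleton 0)] at this
  exact (measure_ball_pos μ 0 (by norm_num)).ne' this

lemma setLIntegral_ball_rpow_neg_finrank_div_neg_log_eq_top {ε : ℝ} (hε0 : 0 < ε) (hε1 : ε < 1) :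
    ∫⁻ y in ball (0 : E) ε, ENNReal.ofReal (‖y‖ ^ (-(finrank ℝ E : ℝ)) / -log ‖y‖) ∂μ = ⊤ := by
  have hnonneg : ∀ y ∈ ball (0 : E) ε, 0 ≤ ‖y‖ ^ (-(finrank ℝ E : ℝ)) / -log ‖y‖ := fun y hy ↦
    div_nonneg (rpow_nonneg (norm_nonneg y) _)
      (neg_nonneg.2 (log_nonpos (norm_nonneg y) ((mem_ball_zero_iff.1 hy).le.trans hε1.le)))
  have hmeas : Measurable fun y : E ↦ ‖y‖ ^ (-(finrank ℝ E : ℝ)) / -log ‖y‖ := by fun_prop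
  rw [← not_ne_iff, lintegral_ofReal_ne_top_iff_integrable hmeas.aestronglyMeasurable
    ((ae_restrict_iff' measurableSet_ball).2 (ae_of_all _ hnonneg))]
  intro hint
  have h1d := (integrableOn_fun_norm_addHaar μ
    (f := fun r ↦ r ^ (-(finrank ℝ E : ℝ)) / -log r)).1 hint
  refine (lt_irrefl (1 : ℝ)) ((integrableOn_inv_mul_neg_log_rpow_iff hε0 hε1).1
    (h1d.congr_fun (fun r hr ↦ ?_) measurableSet_Ioo))
  have hlog : 0 < -log r := neg_pos.2 (log_neg hr.1 (hr.2.trans hε1))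
  have := rpow_natCast_pred_mul_abs_div_neg_log_rpow hr.1 (hr.2.trans hε1)
    (finrank_pos (R := ℝ) (M := E)) (-(finrank ℝ E : ℝ)) 1
  rw [rpow_one, abs_of_pos (div_pos (rpow_pos_of_pos hr.1 _) hlog), mul_one,
    show (finrank ℝ E : ℝ) - 1 + -(finrank ℝ E : ℝ) = -1 by ring, rpow_neg_one] at this
  exact this

lemma lintegral_powLogSingularity_mul_rpow_eq_top (α lam : ℝ) {x : E} (hx : x ≠ 0) :
    ∫⁻ y, ENNReal.ofReal
      (powLogSingularity (α - finrank ℝ E) y * ‖y‖ ^ (-α) * ‖x - y‖ ^ (-lam)) ∂μ = ⊤ := by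
  set n : ℝ := (finrank ℝ E : ℝ)
  have hn : 0 < n := Nat.cast_pos.2 finrank_pos
  have hx0 : 0 < ‖x - 0‖ ^ (-lam) := by
    rw [sub_zero]
    exact rpow_pos_of_pos (norm_pos_iff.2 hx) _
  have hcont : ContinuousAt (fun y : E ↦ ‖x - y‖ ^ (-lam)) 0 :=
    (continuous_const.sub continuous_id).norm.continuousAt.rpow_const (Or.inl (by simpa using hx))
  obtain ⟨δ, hδ0, hδ⟩ :=
    Metric.eventually_nhds_iff.1 (hcont.eventually (lt_mem_nhds (half_lt_self hx0)))
  set c := ‖x - 0‖ ^ (-lam) / 2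
  set ε := min δ 2⁻¹
  have hpointwise : ∀ y ∈ ball (0 : E) ε, c * (‖y‖ ^ (-n) / -log ‖y‖) ≤
      powLogSingularity (α - n) y * ‖y‖ ^ (-α) * ‖x - y‖ ^ (-lam) := by
    intro y hy
    have hyδ : ‖y‖ < δ := (mem_ball_zero_iff.1 hy).trans_le (min_le_left _ _)
    have hy2 : ‖y‖ < 2⁻¹ := (mem_ball_zero_iff.1 hy).trans_le (min_le_right _ _)
    have hlog : 0 ≤ -log ‖y‖ :=
      neg_nonneg.2 (log_nonpos (norm_nonneg y) (hy2.le.trans (by norm_num)))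
    have hpow : ‖y‖ ^ (α - n) / -log ‖y‖ * ‖y‖ ^ (-α) = ‖y‖ ^ (-n) / -log ‖y‖ := by
      rw [div_mul_eq_mul_div, ← rpow_add' (norm_nonneg y) (by linarith),
        show α - n + -α = -n by ring]
    rw [powLogSingularity, indicator_of_mem (mem_ball_zero_iff.2 hy2), hpow, mul_comm c]
    exact mul_le_mul_of_nonneg_left (hδ (by simpa using hyδ)).le
      (div_nonneg (rpow_nonneg (norm_nonneg y) _) hlog)
  have hε0 : 0 < ε := lt_min hδ0 (by norm_num)
  have hε1 : ε < 1 := (min_le_right _ _).trans_lt (by norm_num)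
  refine top_le_iff.1 ?_
  calc ⊤ = ENNReal.ofReal c *
        ∫⁻ y in ball (0 : E) ε, ENNReal.ofReal (‖y‖ ^ (-n) / -log ‖y‖) ∂μ := by
        rw [setLIntegral_ball_rpow_neg_finrank_div_neg_log_eq_top μ hε0 hε1,
          ENNReal.mul_top (ENNReal.ofReal_pos.2 (half_pos hx0)).ne']
    _ = ∫⁻ y in ball (0 : E) ε, ENNReal.ofReal (c * (‖y‖ ^ (-n) / -log ‖y‖)) ∂μ := by
        rw [← lintegral_const_mul' _ _ ENNReal.ofReal_ne_top]
        exact setLIntegral_congr_fun measurableSet_ball fun y hy ↦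
          (ENNReal.ofReal_mul (half_pos hx0).le).symm
    _ ≤ ∫⁻ y in ball (0 : E) ε, ENNReal.ofReal
          (powLogSingularity (α - n) y * ‖y‖ ^ (-α) * ‖x - y‖ ^ (-lam)) ∂μ :=
        setLIntegral_mono' measurableSet_ball fun y hy ↦
          ENNReal.ofReal_le_ofReal (hpointwise y hy)
    _ ≤ _ := setLIntegral_le_lintegral _ _

end

theorem stmt_9_general (d : ℕ) (α lam p : ℝ)
    (hα : 0 < α) (hp1 : 1 ≤ p) (hp : p ≤ (d : ℝ) / (d - α)) :
    ∃ f : EuclideanSpace ℝ (Fin d) → ℝ, (∀ x, 0 ≤ f x) ∧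
      MemLp f (ENNReal.ofReal p) volume ∧
      eLpNorm f (ENNReal.ofReal p) volume ≠ 0 ∧
      ∀ x : EuclideanSpace ℝ (Fin d), x ≠ 0 →
        ∫⁻ y, ENNReal.ofReal (f y * ‖y‖ ^ (-α) * ‖x - y‖ ^ (-lam)) = ⊤ := by
  have hdα : 0 < (d : ℝ) - α := by
    by_contra! h
    linarith [hp.trans (div_nonpos_of_nonneg_of_nonpos d.cast_nonneg h)]
  have : Nonempty (Fin d) := ⟨⟨0, by exact_mod_cast (by linarith : (0 : ℝ) < d)⟩⟩
  have hfinrank : finrank ℝ (EuclideanSpace ℝ (Fin d)) = d := finrank_euclideanSpace_fin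
  refine ⟨powLogSingularity (α - d), powLogSingularity_nonneg _,
    memLp_powLogSingularity _ (by linarith) ?_,
    eLpNorm_powLogSingularity_ne_zero _ _ (ENNReal.ofReal_pos.2 (by linarith)).ne', fun x hx ↦ ?_⟩
  · rw [hfinrank]
    rcases ((le_div_iff₀ hdα).1 hp).lt_or_eq with hlt | heq
    · exact Or.inl (by linarith)
    · exact Or.inr ⟨by linarith, by nlinarith⟩
  · simpa [hfinrank] using lintegral_powLogSingularity_mul_rpow_eq_top volume α lam hx

/-- If `p ≤ d/(d-α)` the weighted Riesz potential is unbounded: there is a nonnegative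
`f ∈ L^p` with positive norm whose potential is `+∞` at every `x ≠ 0`. -/
theorem stmt_9 (d : ℕ) (hd : 1 ≤ d) (α β lam p : ℝ)
    (hα : 0 < α) (hβ0 : 0 ≤ β) (hlam : 0 < lam) (hsum : α + β + lam < d)
    (hp1 : 1 ≤ p) (hp : p ≤ (d : ℝ) / (d - α)) :
    ∃ f : EuclideanSpace ℝ (Fin d) → ℝ, (∀ x, 0 ≤ f x) ∧
      MemLp f (ENNReal.ofReal p) volume ∧
      eLpNorm f (ENNReal.ofReal p) volume ≠ 0 ∧
      ∀ x : EuclideanSpace ℝ (Fin d), x ≠ 0 →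
        ∫⁻ y, ENNReal.ofReal (f y * ‖y‖ ^ (-α) * ‖x - y‖ ^ (-lam)) = ⊤ :=
  stmt_9_general d α lam p hα hp1 hp
end
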